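/- arXiv:2209.04692 — 6 statements merged into one kernel-verified Lean document; each statement's English description precedes it below -/
import Mathlib

section
/- For every natural number K ≥ 0, reals a, b ≥ 0, c > 0, and p ∈ [0,1] with p ≠ 1, the identity ∑_{n=0}^{K} ((a n + b)/(n + c)) · C(K,n) p^n (1−p)^{K−n} = a + (b/c − a)(1−p)^K · ₂F₁(c, −K; c+1; p/(p−1)) holds, where ₂F₁ is the Gauss hypergeometric function (here a terminating hypergeometric sum since −K is a nonpositive integer). -/
lemma ascB (c : ℝ) (j : ℕ) :
    (ascPochhammer ℝ j).eval (c + 1) * c = (ascPochhammer ℝ j).eval c * (c + j) := by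
  induction j with
  | zero => simp
  | succ j ih =>
    rw [ascPochhammer_succ_eval, ascPochhammer_succ_eval]
    push_cast
    linear_combination (c + 1 + (j:ℝ)) * ih

lemma ascA (K j : ℕ) (hj : j ≤ K) :
    (ascPochhammer ℝ j).eval (-(K : ℝ)) = (-1) ^ j * (K.choose j) * (j.factorial : ℝ) := by
  induction j with
  | zero => simp
  | succ j ih =>
    have hj' : j < K := hj
    rw [ascPochhammer_succ_eval, ih hj'.le]
    have hch : (K.choose (j+1) : ℝ) * (j+1) = (K.choose j : ℝ) * (K - j) := by
      have h := Nat.choose_succ_right_eq K j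
      have h2 : ((K.choose (j+1)) * (j+1) : ℝ) = ((K.choose j : ℕ) : ℝ) * ((K - j : ℕ) : ℝ) := by
        exact_mod_cast h
      rw [h2, Nat.cast_sub hj'.le]
    push_cast [Nat.factorial_succ]
    linear_combination ((-1:ℝ)^j * (j.factorial:ℝ)) * hch

/-- Binomial expectation of `(a n + b)/(n + c)` in terminating Gauss
hypergeometric form. -/
theorem stmt5 (K : ℕ) (a b c p : ℝ) (ha : 0 ≤ a) (hb : 0 ≤ b) (hc : 0 < c)
    (hp0 : 0 ≤ p) (hp1 : p ≤ 1) (hpne : p ≠ 1) :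
    ∑ n ∈ Finset.range (K + 1),
        ((a * n + b) / (n + c)) * (K.choose n) * p ^ n * (1 - p) ^ (K - n)
      = a + (b / c - a) * (1 - p) ^ K *
          ∑ j ∈ Finset.range (K + 1),
            ((ascPochhammer ℝ j).eval c * (ascPochhammer ℝ j).eval (-(K : ℝ)))
              / ((ascPochhammer ℝ j).eval (c + 1) * (j.factorial : ℝ)) * (p / (p - 1)) ^ j := by
  have hplt : p < 1 := lt_of_le_of_ne hp1 hpne
  have hq : (0:ℝ) < 1 - p := by linarith
  have hq0 : (1 - p) ≠ 0 := ne_of_gt hq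
  have hbin : ∑ n ∈ Finset.range (K+1), (K.choose n : ℝ) * p^n * (1-p)^(K-n) = 1 := by
    have h := add_pow p (1-p) K
    have h2 : p + (1 - p) = 1 := by ring
    rw [h2, one_pow] at h
    calc ∑ n ∈ Finset.range (K+1), (K.choose n : ℝ) * p^n * (1-p)^(K-n)
        = ∑ n ∈ Finset.range (K+1), p^n * (1-p)^(K-n) * (K.choose n : ℝ) := by
          apply Finset.sum_congr rfl; intro n _; ring
      _ = 1 := h.symm
  have hsplit : ∀ n ∈ Finset.range (K+1),
      ((a*(n:ℝ)+b)/((n:ℝ)+c)) * (K.choose n) * p^n * (1-p)^(K-n)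
      = a * ((K.choose n:ℝ) * p^n * (1-p)^(K-n))
        + ((b - a*c)/((n:ℝ)+c)) * ((K.choose n:ℝ) * p^n * (1-p)^(K-n)) := by
    intro n _
    have hnc : (n:ℝ) + c ≠ 0 := by positivity
    field_simp
    ring
  rw [Finset.sum_congr rfl hsplit, Finset.sum_add_distrib, ← Finset.mul_sum, hbin, mul_one]
  congr 1
  rw [Finset.mul_sum]
  apply Finset.sum_congr rfl
  intro j hj
  have hjK : j ≤ K := Nat.lt_succ_iff.mp (Finset.mem_range.mp hj)
  rw [ascA K j hjK]
  have hB := ascB c j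
  have hcj : c + (j:ℝ) ≠ 0 := by positivity
  have h1 : (ascPochhammer ℝ j).eval (c+1) ≠ 0 :=
    ne_of_gt (ascPochhammer_pos j (c+1) (by linarith))
  have h2 : (j.factorial : ℝ) ≠ 0 := by exact_mod_cast j.factorial_ne_zero
  have hE : (ascPochhammer ℝ j).eval c = (ascPochhammer ℝ j).eval (c+1) * c / (c + (j:ℝ)) := by
    field_simp
    linarith [hB]
  have hpow : (1-p)^(K-j) = (1-p)^K / (1-p)^j := pow_sub₀ _ hq0 hjK
  have hm1 : ((-1:ℝ))^(j*2) = 1 := Even.neg_one_pow ⟨j, by ring⟩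
  have hz : (p/(p-1))^j = (-1)^j * (p^j / (1-p)^j) := by
    rw [div_pow, show p - 1 = -(1-p) by ring, neg_pow]
    have h3 : ((-1:ℝ))^j ≠ 0 := by positivity
    field_simp
    ring_nf
    simp only [hm1]
    ring
  rw [hE, hpow, hz]
  have hqj : (1-p)^j ≠ 0 := pow_ne_zero _ hq0
  field_simp
  ring_nf
  simp only [hm1]
  ring
end

section
/- Fix K ≥ 1, z ∈ [0,1), p, q ≥ 0 with p + q + z = 1 and q < p, and σ², γ > 0. Define P_err(K) = ∑_{n=0}^{K} [(n·q/(1−z) + σ²/(2γ))/(n + σ²/γ)] C(K,n) z^{K−n}(1−z)^n. Then P_err(K+1) < P_err(K), i.e., adding an edge device strictly decreases the error probability. -/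
/-- The error probability of Lemma 2 as a function of the number of EDs `K`. -/
noncomputable def perr (K : ℕ) (σ2 γ q z : ℝ) : ℝ :=
  ∑ n ∈ Finset.range (K + 1),
    (((n : ℝ) * (q / (1 - z)) + σ2 / (2 * γ)) / (n + σ2 / γ))
      * (K.choose n) * z ^ (K - n) * (1 - z) ^ n

/-- Adding an edge device strictly decreases the error probability. -/
theorem stmt10 (K : ℕ) (hK : 1 ≤ K) (σ2 γ p q z : ℝ) (hσ : 0 < σ2) (hγ : 0 < γ)
    (hp : 0 ≤ p) (hq : 0 ≤ q) (hz0 : 0 ≤ z) (hz1 : z < 1)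
    (hsum : p + q + z = 1) (hqp : q < p) :
    perr (K + 1) σ2 γ q z < perr K σ2 γ q z := by
  have hz : (0:ℝ) < 1 - z := by linarith
  set W : ℕ → ℝ := fun n => ((n : ℝ) * (q / (1 - z)) + σ2 / (2 * γ)) / (n + σ2 / γ) with hW
  set f : ℕ → ℝ := fun n => (K.choose n : ℝ) * z ^ (K - n) * (1 - z) ^ n with hf
  have ht : (0:ℝ) < σ2 / γ := div_pos hσ hγ
  have hc : q / (1 - z) < 1 / 2 := by
    rw [div_lt_iff₀ hz]; nlinarith
  have hc0 : 0 ≤ q / (1 - z) := div_nonneg hq hz.le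
  -- W is strictly decreasing
  have hdec : ∀ n : ℕ, W (n + 1) < W n := by
    intro n
    have h1 : (0:ℝ) < (n : ℝ) + σ2 / γ := by positivity
    have h2 : (0:ℝ) < ((n : ℕ) + 1 : ℕ) + σ2 / γ := by positivity
    simp only [hW]
    rw [div_lt_div_iff₀ (by push_cast; positivity) h1]
    have hσγ : σ2 / (2 * γ) = (σ2 / γ) / 2 := by
      rw [div_div]; ring_nf
    push_cast
    nlinarith [mul_pos ht (sub_pos.2 hc)]
  -- f is nonnegative, and positive at K
  have hfnn : ∀ n, 0 ≤ f n := by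
    intro n; simp only [hf]; positivity
  have hfK : 0 < f K := by
    simp only [hf, Nat.choose_self, Nat.sub_self, pow_zero]
    push_cast; simpa using pow_pos hz K
  -- key identity
  have key : perr (K + 1) σ2 γ q z =
      z * perr K σ2 γ q z + (1 - z) * ∑ n ∈ Finset.range (K + 1), W (n + 1) * f n := by
    have e1 : perr (K + 1) σ2 γ q z =
        (∑ n ∈ Finset.range (K + 1), W (n + 1) *
          ((K.choose n : ℝ) + (K.choose (n + 1) : ℝ)) * z ^ (K - n) * (1 - z) ^ (n + 1))
          + W 0 * z ^ (K + 1) := by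
      rw [perr, Finset.sum_range_succ' _ (K + 1)]
      simp only [Nat.choose_succ_succ, Nat.succ_sub_succ, Nat.choose_zero_right,
        Nat.sub_zero, Nat.cast_zero, Nat.cast_one, pow_zero]
      congr 1
      · apply Finset.sum_congr rfl
        intro n hn
        simp only [hW]
        push_cast
        ring
      · simp only [hW]
        push_cast
        ring
    have e2 : z * perr K σ2 γ q z =
        (∑ n ∈ Finset.range K, W (n + 1) * (K.choose (n + 1) : ℝ) * z ^ (K - n) * (1 - z) ^ (n + 1))
          + W 0 * z ^ (K + 1) := by
      rw [perr, Finset.mul_sum, Finset.sum_range_succ' _ K]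
      simp only [Nat.succ_sub_succ, Nat.choose_zero_right, Nat.sub_zero, Nat.cast_zero,
        Nat.cast_one, pow_zero]
      congr 1
      · apply Finset.sum_congr rfl
        intro n hn
        have hnK : n < K := Finset.mem_range.mp hn
        have : K - n = (K - (n + 1)) + 1 := by omega
        rw [this]
        ring
      · ring
    have e3 : ∑ n ∈ Finset.range (K + 1), W (n + 1) * (K.choose (n + 1) : ℝ)
          * z ^ (K - n) * (1 - z) ^ (n + 1)
        = ∑ n ∈ Finset.range K, W (n + 1) * (K.choose (n + 1) : ℝ)
          * z ^ (K - n) * (1 - z) ^ (n + 1) := by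
      rw [Finset.sum_range_succ, Nat.choose_succ_self]
      simp
    have hsplit : ∀ n ∈ Finset.range (K + 1),
        W (n + 1) * ((K.choose n : ℝ) + (K.choose (n + 1) : ℝ)) * z ^ (K - n) * (1 - z) ^ (n + 1)
          = W (n + 1) * (K.choose (n + 1) : ℝ) * z ^ (K - n) * (1 - z) ^ (n + 1)
            + (1 - z) * (W (n + 1) * f n) := by
      intro n hn
      simp only [hf]
      ring
    rw [e1, e2, ← e3, Finset.mul_sum, Finset.sum_congr rfl hsplit, Finset.sum_add_distrib]
    ring
  -- strict sum inequality
  have hlt : ∑ n ∈ Finset.range (K + 1), W (n + 1) * f n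
      < ∑ n ∈ Finset.range (K + 1), W n * f n := by
    apply Finset.sum_lt_sum
    · intro n _
      exact mul_le_mul_of_nonneg_right (hdec n).le (hfnn n)
    · exact ⟨K, Finset.self_mem_range_succ K, by
        exact mul_lt_mul_of_pos_right (hdec K) hfK⟩
  have hperr : perr K σ2 γ q z = ∑ n ∈ Finset.range (K + 1), W n * f n := by
    rw [perr]
    apply Finset.sum_congr rfl
    intro n _
    simp only [hW, hf]
    ring
  rw [key, hperr]
  nlinarith [mul_lt_mul_of_pos_left hlt hz]
end

section
/- Fix K ≥ 1, z ∈ [0,1), p, q ≥ 0 with p + q + z = 1 and q < p, and σ² > 0. The function γ ↦ P_err(γ) = ∑_{n=0}^{K} [(n·q/(1−z) + σ²/(2γ))/(n + σ²/γ)] C(K,n) z^{K−n}(1−z)^n is strictly decreasing on (0, ∞): if a > 1 then P_err(γa) < P_err(γ). -/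
section WeightedMean

variable {n c t t' : ℝ}

theorem mul_add_half_div_add_eq (h : n + t ≠ 0) :
    (n * c + t / 2) / (n + t) = 1 / 2 - n * (1 / 2 - c) / (n + t) := by
  field_simp
  ring

theorem mul_add_half_div_add_le (hn : 0 ≤ n) (hc : c ≤ 1 / 2) (ht : 0 < t) (htt' : t ≤ t') :
    (n * c + t / 2) / (n + t) ≤ (n * c + t' / 2) / (n + t') := by
  rw [mul_add_half_div_add_eq (by positivity), mul_add_half_div_add_eq (by linarith)]
  gcongr

theorem mul_add_half_div_add_lt (hn : 0 < n) (hc : c < 1 / 2) (ht : 0 < t) (htt' : t < t') :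
    (n * c + t / 2) / (n + t) < (n * c + t' / 2) / (n + t') := by
  rw [mul_add_half_div_add_eq (by positivity), mul_add_half_div_add_eq (by linarith)]
  have : 0 < n * (1 / 2 - c) := mul_pos hn (by linarith)
  gcongr

end WeightedMean

theorem perr_lt_perr_of_lt {K : ℕ} (hK : 1 ≤ K) {σ2 γ γ' q z : ℝ} (hσ : 0 < σ2) (hγ : 0 < γ)
    (hγγ' : γ < γ') (hz0 : 0 ≤ z) (hz1 : z < 1) (hc : q / (1 - z) < 1 / 2) :
    perr K σ2 γ' q z < perr K σ2 γ q z := by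
  have hγ' : 0 < γ' := hγ.trans hγγ'
  have ht : σ2 / γ' < σ2 / γ := div_lt_div_of_pos_left hσ hγ hγγ'
  have half_div (g : ℝ) : σ2 / (2 * g) = σ2 / g / 2 := by ring
  simp only [perr, half_div]
  apply Finset.sum_lt_sum
  · intro n _
    have := mul_add_half_div_add_le (Nat.cast_nonneg n) hc.le (by positivity) ht.le
    gcongr ?_ * _ * _ * _
  · refine ⟨K, Finset.self_mem_range_succ K, ?_⟩
    have := mul_add_half_div_add_lt (n := K) (by positivity) hc (by positivity) ht
    simp only [Nat.choose_self, Nat.sub_self, pow_zero, Nat.cast_one, mul_one]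
    gcongr ?_ * _

theorem stmt11_general (K : ℕ) (hK : 1 ≤ K) (σ2 γ p q z a : ℝ) (hσ : 0 < σ2) (hγ : 0 < γ)
    (hz0 : 0 ≤ z) (hz1 : z < 1)
    (hsum : p + q + z = 1) (hqp : q < p) (ha : 1 < a) :
    perr K σ2 (γ * a) q z < perr K σ2 γ q z := by
  have hc : q / (1 - z) < 1 / 2 := by
    rw [div_lt_iff₀ (by linarith)]
    linarith
  exact perr_lt_perr_of_lt hK hσ hγ (lt_mul_right hγ ha) hz0 hz1 hc

/-- Better power control (larger `γ`) strictly decreases the error probability. -/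
theorem stmt11 (K : ℕ) (hK : 1 ≤ K) (σ2 γ p q z a : ℝ) (hσ : 0 < σ2) (hγ : 0 < γ)
    (hp : 0 ≤ p) (hq : 0 ≤ q) (hz0 : 0 ≤ z) (hz1 : z < 1)
    (hsum : p + q + z = 1) (hqp : q < p) (ha : 1 < a) :
    perr K σ2 (γ * a) q z < perr K σ2 γ q z :=
  stmt11_general K hK σ2 γ p q z a hσ hγ hz0 hz1 hsum hqp ha
end

section
/- Let g be a real random variable with mean μ < 0 satisfying E[(g − μ)²] ≤ σ²/n_b, with a unimodal distribution symmetric about μ, and let t ≥ 0, ρ ∈ [0,1]. Then P(g > t(1−ρ) + μ + |μ|) = P(g > t(1−ρ)) ≤ (1/2) · 1/((1/√3)·(t(1−ρ)+|μ|)/(σ/√n_b) + 1). -/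
open MeasureTheory Set intervalIntegral
open scoped ENNReal NNReal


lemma gauss_poly_int (e x0 : ℝ) (h : 0 ≤ x0) :
    ∫ t in Set.Ioo (0:ℝ) x0, 2*t*(e*(x0 - t)) = e*x0^3/3 := by
  rw [← integral_Ioc_eq_integral_Ioo, ← intervalIntegral.integral_of_le h]
  have expand : (fun t : ℝ => 2*t*(e*(x0 - t))) = fun t : ℝ => (2*e*x0)*t - (2*e)*t^2 := by
    funext t; ring
  rw [expand]
  rw [intervalIntegral.integral_sub
    ((show Continuous fun t : ℝ => 2*e*x0*t from continuous_const.mul continuous_id).intervalIntegrable 0 x0)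
    ((show Continuous fun t : ℝ => 2*e*t^2 from continuous_const.mul (continuous_pow 2)).intervalIntegrable 0 x0)]
  rw [intervalIntegral.integral_const_mul, intervalIntegral.integral_const_mul, integral_id, integral_pow]
  norm_num
  ring


lemma gauss_var_lb (f : ℝ → ℝ) (m k' : ℝ)
    (hf_nonneg : ∀ x, 0 ≤ f x) (hf_meas : Measurable f) (hf_int : Integrable f)
    (hmono : ∀ x y, m ≤ x → x ≤ y → f y ≤ f x)
    (hvar_int : Integrable (fun x => (x - m)^2 * f x))
    (hmk' : m < k') (he : 0 < f k') :
    f k' * ((k' - m) + (∫ x in Set.Ioi k', f x) / f k')^3 / 3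
      ≤ ∫ x in Set.Ioi m, (x - m)^2 * f x := by
  set e := f k' with he_def
  set p := ∫ x in Set.Ioi k', f x with hp_def
  have hp0 : 0 ≤ p := setIntegral_nonneg measurableSet_Ioi (fun x _ => hf_nonneg x)
  set k := k' - m with hk_def
  have hk0 : 0 < k := by simp only [hk_def]; linarith
  set x0 : ℝ := k + p/e with hx0_def
  have hpe0 : 0 ≤ p/e := div_nonneg hp0 he.le
  have hx00 : 0 < x0 := by simp only [hx0_def]; linarith
  have hkx0 : k ≤ x0 := by simp only [hx0_def]; linarith
  have hpe : p = e*(x0 - k) := by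
    simp only [hx0_def]; field_simp; ring
  -- tail bound
  have hG : ∀ t, 0 < t → t ≤ x0 → e*(x0 - t) ≤ ∫ x in Set.Ioi (m+t), f x := by
    intro t ht htx
    rcases le_or_gt t k with h | h
    · have hsplit : ∫ x in Set.Ioi (m+t), f x = (∫ x in Set.Ioc (m+t) k', f x) + p := by
        rw [hp_def, ← setIntegral_union (Set.Ioc_disjoint_Ioi le_rfl) measurableSet_Ioi
          hf_int.integrableOn hf_int.integrableOn, Set.Ioc_union_Ioi_eq_Ioi (by simp only [hk_def] at h; linarith)]
      have hconst : ∫ _x in Set.Ioc (m+t) k', e ∂volume = (k - t) * e := by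
        rw [setIntegral_const, measureReal_def, Real.volume_Ioc, ENNReal.toReal_ofReal (by simp only [hk_def] at h ⊢; linarith)]
        simp only [smul_eq_mul, hk_def]; ring
      have hlow : (k - t) * e ≤ ∫ x in Set.Ioc (m+t) k', f x := by
        rw [← hconst]
        refine setIntegral_mono_on (integrableOn_const ?_) hf_int.integrableOn
          measurableSet_Ioc (fun x hx => hmono x k' (by linarith [hx.1]) hx.2) 
        rw [Real.volume_Ioc]; exact ENNReal.ofReal_ne_top
      have hid : e*(x0 - t) = (k - t)*e + p := by rw [hpe]; ring
      linarith
    · have hsplit : p = (∫ x in Set.Ioc k' (m+t), f x) + ∫ x in Set.Ioi (m+t), f x := by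
        rw [hp_def, ← setIntegral_union (Set.Ioc_disjoint_Ioi le_rfl) measurableSet_Ioi
          hf_int.integrableOn hf_int.integrableOn, Set.Ioc_union_Ioi_eq_Ioi (by simp only [hk_def] at h; linarith)]
      have hconst : ∫ _x in Set.Ioc k' (m+t), e ∂volume = (t - k) * e := by
        rw [setIntegral_const, measureReal_def, Real.volume_Ioc, ENNReal.toReal_ofReal (by simp only [hk_def] at h ⊢; linarith)]
        simp only [smul_eq_mul, hk_def]; ring
      have hup : (∫ x in Set.Ioc k' (m+t), f x) ≤ (t - k)*e := by
        rw [← hconst]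
        refine setIntegral_mono_on hf_int.integrableOn (integrableOn_const ?_)
          measurableSet_Ioc (fun x hx => hmono k' x (le_of_lt hmk') hx.1.le)
        rw [Real.volume_Ioc]; exact ENNReal.ofReal_ne_top
      have hid : e*(x0 - t) = p - (t - k)*e := by rw [hpe]; ring
      linarith
  -- the weighted measure
  set F : ℝ → ℝ≥0∞ := fun x => ENNReal.ofReal (f x) with hF_def
  have hFmeas : Measurable F := ENNReal.measurable_ofReal.comp hf_meas
  set μ : Measure ℝ := (volume.restrict (Set.Ioi m)).withDensity F with hμ_def
  have hμs : ∀ s : Set ℝ, MeasurableSet s → μ s = ∫⁻ x in s ∩ Set.Ioi m, F x := by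
    intro s hs
    rw [hμ_def, withDensity_apply _ hs, Measure.restrict_restrict hs]
  have f_nn : 0 ≤ᵐ[μ] fun ω : ℝ => ω - m := by
    rw [Filter.EventuallyLE, ae_iff]
    simp only [Pi.zero_apply, not_le]
    have hset : {ω : ℝ | ω - m < 0} = Set.Iio m := by
      ext x; simp only [Set.mem_setOf_eq, Set.mem_Iio]; constructor <;> intro <;> linarith
    rw [hset, hμs _ measurableSet_Iio]
    rw [Set.Iio_inter_Ioi, Set.Ioo_self, Measure.restrict_empty, lintegral_zero_measure]
  have layer := lintegral_comp_eq_lintegral_meas_le_mul μ (f := fun ω : ℝ => ω - m)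
    (g := fun t => 2*t) f_nn ((measurable_id.sub measurable_const).aemeasurable)
    (fun t _ => (continuous_const.mul continuous_id).intervalIntegrable 0 t)
    (by filter_upwards [ae_restrict_mem measurableSet_Ioi] with t ht; simp only [Set.mem_Ioi] at ht; linarith)
  -- LHS of layercake
  have hL1 : ∀ ω : ℝ, (∫ t in (0:ℝ)..(ω - m), 2*t) = (ω - m)^2 := by
    intro ω
    rw [intervalIntegral.integral_const_mul, integral_id]
    ring
  have hvarnn : 0 ≤ᵐ[volume.restrict (Set.Ioi m)] fun x => (x - m)^2 * f x :=
    Filter.Eventually.of_forall fun x => mul_nonneg (sq_nonneg _) (hf_nonneg x)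
  have hLHS : ∫⁻ ω, ENNReal.ofReal (∫ t in (0:ℝ)..(ω - m), 2*t) ∂μ
      = ENNReal.ofReal (∫ x in Set.Ioi m, (x - m)^2 * f x) := by
    simp_rw [hL1]
    rw [hμ_def, lintegral_withDensity_eq_lintegral_mul _ hFmeas
      (show Measurable fun ω : ℝ => ENNReal.ofReal ((ω - m)^2) by fun_prop)]
    rw [ofReal_integral_eq_lintegral_ofReal hvar_int.integrableOn hvarnn]
    refine lintegral_congr fun x => ?_
    simp only [hF_def, Pi.mul_apply]
    rw [← ENNReal.ofReal_mul (hf_nonneg x), mul_comm]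
  -- RHS of layercake : lower bound
  have hInt2 : IntegrableOn (fun t : ℝ => 2*t*(e*(x0 - t))) (Set.Ioo 0 x0) := by
    have hc : Continuous fun t : ℝ => 2*t*(e*(x0 - t)) :=
      (continuous_const.mul continuous_id).mul (continuous_const.mul (continuous_const.sub continuous_id))
    exact (hc.integrableOn_Icc (a := 0) (b := x0)).mono_set Set.Ioo_subset_Icc_self
  have h2tnn : 0 ≤ᵐ[volume.restrict (Set.Ioo 0 x0)] fun t : ℝ => 2*t*(e*(x0 - t)) := by
    filter_upwards [ae_restrict_mem measurableSet_Ioo] with t ht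
    have h1 := ht.1; have h2 := ht.2
    have : 0 ≤ x0 - t := by linarith
    positivity
  have hRHS : ENNReal.ofReal (e * x0^3/3)
      ≤ ∫⁻ t in Set.Ioi (0:ℝ), μ {a : ℝ | t ≤ a - m} * ENNReal.ofReal (2*t) := by
    have hsub : ∫⁻ t in Set.Ioo 0 x0, ENNReal.ofReal (2*t*(e*(x0 - t)))
        ≤ ∫⁻ t in Set.Ioi (0:ℝ), μ {a : ℝ | t ≤ a - m} * ENNReal.ofReal (2*t) := by
      refine le_trans ?_ (lintegral_mono_set (Set.Ioo_subset_Ioi_self : Set.Ioo (0:ℝ) x0 ⊆ Set.Ioi 0))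
      refine lintegral_mono_ae ?_
      filter_upwards [ae_restrict_mem measurableSet_Ioo] with t ht
      have ht1 := ht.1
      have ht2 := ht.2
      have hmeasge : ENNReal.ofReal (e*(x0 - t)) ≤ μ {a : ℝ | t ≤ a - m} := by
        have h1 : {a : ℝ | t ≤ a - m} = Set.Ici (m+t) := by
          ext a; simp only [Set.mem_setOf_eq, Set.mem_Ici]; constructor <;> intro <;> linarith
        rw [h1, hμs _ measurableSet_Ici]
        have hss : Set.Ioi (m+t) ⊆ Set.Ici (m+t) ∩ Set.Ioi m := fun x hx =>
          ⟨Set.mem_Ici.2 (le_of_lt (Set.mem_Ioi.1 hx)), lt_trans (by linarith : m < m + t) hx⟩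
        calc ENNReal.ofReal (e*(x0 - t)) ≤ ENNReal.ofReal (∫ x in Set.Ioi (m+t), f x) :=
              ENNReal.ofReal_le_ofReal (hG t ht1 ht2.le)
          _ = ∫⁻ x in Set.Ioi (m+t), F x := by
              rw [ofReal_integral_eq_lintegral_ofReal hf_int.integrableOn
                (Filter.Eventually.of_forall fun x => hf_nonneg x)]
          _ ≤ ∫⁻ x in Set.Ici (m+t) ∩ Set.Ioi m, F x := lintegral_mono_set hss
      calc ENNReal.ofReal (2*t*(e*(x0 - t)))
          = ENNReal.ofReal (e*(x0 - t)) * ENNReal.ofReal (2*t) := by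
            rw [← ENNReal.ofReal_mul (by nlinarith : (0:ℝ) ≤ e*(x0 - t))]
            ring_nf
        _ ≤ μ {a : ℝ | t ≤ a - m} * ENNReal.ofReal (2*t) := mul_le_mul_left hmeasge _
    refine le_trans ?_ hsub
    rw [← ofReal_integral_eq_lintegral_ofReal hInt2 h2tnn]
    apply ENNReal.ofReal_le_ofReal
    rw [gauss_poly_int e x0 hx00.le]
  -- combine
  have hfinal : ENNReal.ofReal (e * x0^3/3) ≤ ENNReal.ofReal (∫ x in Set.Ioi m, (x - m)^2 * f x) := by
    rw [← hLHS, layer]; exact hRHS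
  have hvar0 : 0 ≤ ∫ x in Set.Ioi m, (x - m)^2 * f x :=
    setIntegral_nonneg measurableSet_Ioi fun x _ => mul_nonneg (sq_nonneg _) (hf_nonneg x)
  have := (ENNReal.ofReal_le_ofReal_iff hvar0).1 hfinal
  linarith


lemma gauss_refl (h : ℝ → ℝ) (m : ℝ) (hs : ∀ x, h (m + x) = h (m - x)) :
    ∫ x in Set.Iic m, h x = ∫ x in Set.Ioi m, h x := by
  have hemb : MeasurableEmbedding (fun x : ℝ => 2*m - x) :=
    (Homeomorph.subLeft (2*m)).measurableEmbedding
  have hmap : Measure.map (fun x : ℝ => 2*m - x) volume = volume :=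
    Measure.map_sub_left_eq_self volume (2*m)
  have hpre : (fun x : ℝ => 2*m - x) ⁻¹' (Set.Iic m) = Set.Ici m := by
    ext x; simp only [Set.mem_preimage, Set.mem_Iic, Set.mem_Ici]
    constructor <;> intro hx <;> linarith
  have hpt : ∀ x : ℝ, h (2*m - x) = h x := by
    intro x
    have h1 := hs (x - m)
    have e1 : m + (x - m) = x := by ring
    have e2 : m - (x - m) = 2*m - x := by ring
    rw [e1, e2] at h1; exact h1.symm
  calc ∫ x in Set.Iic m, h x = ∫ x in Set.Iic m, h x ∂(Measure.map (fun x : ℝ => 2*m - x) volume) := by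
        rw [hmap]
    _ = ∫ x in (fun x : ℝ => 2*m - x) ⁻¹' (Set.Iic m), h (2*m - x) := hemb.setIntegral_map h _
    _ = ∫ x in Set.Ici m, h x := by rw [hpre]; simp_rw [hpt]
    _ = ∫ x in Set.Ioi m, h x := integral_Ici_eq_integral_Ioi

lemma gauss_half (h : ℝ → ℝ) (m : ℝ) (hint : Integrable h)
    (hs : ∀ x, h (m + x) = h (m - x)) :
    2 * ∫ x in Set.Ioi m, h x = ∫ x, h x := by
  have : (∫ x in Set.Iic m, h x) + (∫ x in Set.Ioi m, h x) = ∫ x, h x := by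
    rw [← setIntegral_union (Set.Iic_disjoint_Ioi le_rfl) measurableSet_Ioi
      hint.integrableOn hint.integrableOn, Set.Iic_union_Ioi, Measure.restrict_univ]
  rw [gauss_refl h m hs] at this
  linarith


lemma gauss_key (v T c : ℝ) (hv : 0 < v) (hT : T = 1/(2*(v+1))) (hc : 0 ≤ c)
    (hcvT : c ≤ v*T) : c^2 ≤ 2*v^2*(T+c)^3 := by
  have hT0 : 0 < T := by rw [hT]; positivity
  have h1 : (1:ℝ) ≤ 2*T + 6*v*T := by
    have he : 2*T + 6*v*T = (1+3*v)/(v+1) := by rw [hT]; field_simp; ring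
    rw [he, le_div_iff₀ (by linarith)]; nlinarith
  have hvT0 : 0 < v*T := mul_pos hv hT0
  nlinarith [mul_nonneg (mul_nonneg hvT0.le hc) (sub_nonneg.2 hcvT),
    mul_nonneg (sub_nonneg.2 hcvT) (by positivity : (0:ℝ) ≤ 2*v^2*T^3),
    mul_nonneg hc (mul_nonneg (by positivity : (0:ℝ) ≤ v^2*T^2) (by linarith : (0:ℝ) ≤ 2*T+6*v*T-1)),
    mul_nonneg (by positivity : (0:ℝ) ≤ 6*v^2*T) (sq_nonneg c),
    mul_nonneg (by positivity : (0:ℝ) ≤ 2*v^2) (mul_nonneg (mul_nonneg hc hc) hc)]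

lemma gauss_alg (v T c p : ℝ) (hv : 0 < v) (hT : T = 1/(2*(v+1))) (hc : 0 ≤ c) (hp : 0 ≤ p)
    (h1 : c + p ≤ 1/2) (h2 : (c+p)^3 ≤ c^2/(2*v^2)) : p ≤ T := by
  have hT0 : 0 < T := by rw [hT]; positivity
  by_cases hcase : 1/2 - T ≤ c
  · linarith
  · push_neg at hcase
    have hvT : (1:ℝ)/2 - T = v*T := by rw [hT]; field_simp; ring
    have hcvT : c ≤ v*T := by linarith
    have key := gauss_key v T c hv hT hc hcvT
    have h3 : (c+p)^3 ≤ (T+c)^3 := by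
      refine h2.trans ?_
      rw [div_le_iff₀ (by positivity)]
      nlinarith
    have h4 : c + p ≤ T + c := by
      by_contra hcon
      push_neg at hcon
      have := pow_lt_pow_left₀ hcon (by positivity) (n := 3) (by norm_num)
      linarith
    linarith


set_option maxHeartbeats 1000000 in
/-- Gauss-inequality bound on the per-ED incorrect-vote probability: for a
random gradient component with density `f`, unimodal and symmetric about its
mean `m < 0`, with variance at most `σ²/n_b`. -/
theorem stmt12 (f : ℝ → ℝ) (m σ nb t ρ : ℝ)
    (hf_nonneg : ∀ x, 0 ≤ f x) (hf_meas : Measurable f)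
    (hf_int : Integrable f)
    (hprob : ∫ x, f x = 1)
    (hsymm : ∀ x, f (m + x) = f (m - x))
    (hunimodal : ∀ x y, m ≤ x → x ≤ y → f y ≤ f x)
    (hmean_int : Integrable (fun x => x * f x))
    (hmean : ∫ x, x * f x = m)
    (hvar_int : Integrable (fun x => (x - m) ^ 2 * f x))
    (hvar : ∫ x, (x - m) ^ 2 * f x ≤ σ ^ 2 / nb)
    (hm : m < 0) (hσ : 0 < σ) (hnb : 1 ≤ nb)
    (ht : 0 ≤ t) (hρ0 : 0 ≤ ρ) (hρ1 : ρ ≤ 1) :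
    (∫ x in Set.Ioi (t * (1 - ρ) + m + |m|), f x) = (∫ x in Set.Ioi (t * (1 - ρ)), f x) ∧
    (∫ x in Set.Ioi (t * (1 - ρ)), f x)
      ≤ (1 / 2) * (1 / ((1 / Real.sqrt 3) * ((t * (1 - ρ) + |m|) / (σ / Real.sqrt nb)) + 1)) := by
  have habs : |m| = -m := abs_of_neg hm
  have hthr : t * (1 - ρ) + m + |m| = t * (1 - ρ) := by rw [habs]; ring
  constructor
  · rw [hthr]
  · set k' := t * (1 - ρ) with hk'_def
    have hk'0 : 0 ≤ k' := mul_nonneg ht (by linarith)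
    have hmk' : m < k' := lt_of_lt_of_le hm hk'0
    have hnb0 : 0 < nb := lt_of_lt_of_le one_pos hnb
    set s : ℝ := σ / Real.sqrt nb with hs_def
    have hsqnb : 0 < Real.sqrt nb := Real.sqrt_pos.2 hnb0
    have hs0 : 0 < s := div_pos hσ hsqnb
    have hs2 : s^2 = σ^2 / nb := by
      rw [hs_def, div_pow, Real.sq_sqrt hnb0.le]
    set S := σ^2 / nb with hS_def
    have hS0 : 0 < S := by rw [hS_def]; positivity
    have habs2 : k' + |m| = k' - m := by rw [habs]; ring
    rw [habs2]
    set v : ℝ := 1 / Real.sqrt 3 * ((k' - m) / s) with hv_def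
    have hsqrt3 : (0:ℝ) < Real.sqrt 3 := Real.sqrt_pos.2 (by norm_num)
    have hv0 : 0 < v := by
      rw [hv_def]
      exact mul_pos (by positivity) (div_pos (by linarith) hs0)
    have hTeq : (1:ℝ)/2 * (1/(v+1)) = 1/(2*(v+1)) := by
      rw [div_mul_div_comm, one_mul]
    rw [hTeq]
    set p := ∫ x in Set.Ioi k', f x with hp_def
    have hp0 : 0 ≤ p := setIntegral_nonneg measurableSet_Ioi fun x _ => hf_nonneg x
    set e := f k' with he_def
    have he0 : 0 ≤ e := hf_nonneg k'
    -- half mass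
    have hhalf : ∫ x in Set.Ioi m, f x = 1/2 := by
      have h2 := gauss_half f m hf_int hsymm
      rw [hprob] at h2; linarith
    -- half variance
    have hvsym : ∀ x, ((m+x) - m)^2 * f (m+x) = ((m-x) - m)^2 * f (m-x) := by
      intro x; rw [hsymm x]; ring_nf
    have hvhalf : ∫ x in Set.Ioi m, (x - m)^2 * f x ≤ S/2 := by
      have h2 := gauss_half (fun x => (x - m)^2 * f x) m hvar_int hvsym
      simp only [hS_def]
      linarith [hvar]
    -- mass inequality (i)
    have hci : (k' - m) * e + p ≤ 1/2 := by
      have hsplit : ∫ x in Set.Ioi m, f x = (∫ x in Set.Ioc m k', f x) + p := by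
        rw [hp_def, ← setIntegral_union (Set.Ioc_disjoint_Ioi le_rfl) measurableSet_Ioi
          hf_int.integrableOn hf_int.integrableOn, Set.Ioc_union_Ioi_eq_Ioi hmk'.le]
      have hconst : ∫ _x in Set.Ioc m k', e ∂volume = (k' - m) * e := by
        rw [setIntegral_const, measureReal_def, Real.volume_Ioc, ENNReal.toReal_ofReal (by linarith)]
        simp [smul_eq_mul]
      have hlow : (k' - m) * e ≤ ∫ x in Set.Ioc m k', f x := by
        rw [← hconst]
        refine setIntegral_mono_on (integrableOn_const ?_) hf_int.integrableOn
          measurableSet_Ioc (fun x hx => hunimodal x k' hx.1.le hx.2)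
        rw [Real.volume_Ioc]; exact ENNReal.ofReal_ne_top
      linarith [hhalf]
    rcases eq_or_lt_of_le he0 with he | he
    · -- f k' = 0, so the tail integral vanishes
      have hpz : p = 0 := by
        rw [hp_def]
        have hz : ∀ x ∈ Set.Ioi k', f x = 0 := by
          intro x hx
          have h1 := hunimodal k' x hmk'.le (le_of_lt hx)
          rw [← he_def, ← he] at h1
          exact le_antisymm h1 (hf_nonneg x)
        rw [setIntegral_congr_fun measurableSet_Ioi hz]
        simp
      rw [hpz]
      positivity
    · -- main case
      have hvar_lb := gauss_var_lb f m k' hf_nonneg hf_meas hf_int hunimodal hvar_int hmk' he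
      rw [← he_def, ← hp_def] at hvar_lb
      have key1 : e * ((k' - m) + p/e)^3 / 3 ≤ S/2 := le_trans hvar_lb hvhalf
      clear_value s S v p e
      set c := (k' - m) * e with hc_def
      have hc0 : 0 < c := mul_pos (by linarith) he
      clear_value c
      have hepos := he
      have hid : (k' - m) + p/e = (c + p)/e := by
        rw [hc_def]; field_simp
      have key2 : (c + p)^3 ≤ (3/2) * S * e^2 := by
        rw [hid] at key1
        have hval : e * ((c + p)/e)^3 / 3 = (c+p)^3/(3*e^2) := by
          field_simp
        rw [hval] at key1
        rw [div_le_iff₀ (by positivity : (0:ℝ) < 3*e^2)] at key1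
        nlinarith [key1]
      have hk2 : (k' - m)^2 = 3 * v^2 * S := by
        have hv2 : v^2 = (k' - m)^2/(3*s^2) := by
          rw [hv_def, mul_pow, div_pow, div_pow, Real.sq_sqrt (by norm_num : (0:ℝ) ≤ 3)]
          ring
        rw [hv2, hs2]
        field_simp
      have key3 : (c + p)^3 ≤ c^2/(2*v^2) := by
        have hc2 : c^2 = (k' - m)^2 * e^2 := by rw [hc_def]; ring
        have hval2 : c^2/(2*v^2) = (3/2)*S*e^2 := by
          rw [hc2, hk2]; field_simp
        rw [hval2]; exact key2
      exact gauss_alg v (1/(2*(v+1))) c p hv0 rfl hc0.le hp0 hci key3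
end

section
/- Let F: ℝ^Q → ℝ be bounded below by F* and satisfy the coordinate-wise smoothness condition |F(w′) − F(w) − g(w)ᵀ(w′−w)| ≤ (1/2)∑_i L_i (w′_i − w_i)² for all w, w′, where g(w) = ∇F(w) and L_i ≥ 0. Suppose w_{t+1} = w_t − η v_t where η > 0 and v_t ∈ {−1,+1}^Q. Then F(w_{t+1}) − F(w_t) ≤ −η‖g(w_t)‖₁ + (η²/2)‖L‖₁ + 2η ∑_{i=1}^{Q} |g_i(w_t)| · 𝟙[sign(v_{t,i}) ≠ sign(g_i(w_t))]. -/
open Classical in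
/-- Per-round descent inequality for sign-based updates. -/
theorem stmt15 (Q : ℕ) (F : (Fin Q → ℝ) → ℝ) (Fstar : ℝ)
    (g : (Fin Q → ℝ) → Fin Q → ℝ) (L : Fin Q → ℝ) (η : ℝ)
    (hFbdd : ∀ w, Fstar ≤ F w) (hL : ∀ i, 0 ≤ L i) (hη : 0 < η)
    (hsmooth : ∀ w w', |F w' - (F w + ∑ i, g w i * (w' i - w i))|
        ≤ (1 / 2) * ∑ i, L i * (w' i - w i) ^ 2)
    (w v : Fin Q → ℝ) (hv : ∀ i, v i = 1 ∨ v i = -1) :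
    F (fun i => w i - η * v i) - F w
      ≤ -η * ∑ i, |g w i| + η ^ 2 / 2 * ∑ i, L i
        + 2 * η * ∑ i, |g w i| * (if v i ≠ Real.sign (g w i) then (1 : ℝ) else 0) := by
  set w' : Fin Q → ℝ := fun i => w i - η * v i with hw'
  have hsm := hsmooth w w'
  have hdiff : ∀ i, w' i - w i = -(η * v i) := by intro i; simp [hw']
  have hsq : ∀ i, (w' i - w i) ^ 2 = η ^ 2 := by
    intro i
    rcases hv i with h | h <;> rw [hdiff i, h] <;> ring
  have h1 : F w' - F w ≤ ∑ i, g w i * (w' i - w i) + (1/2) * ∑ i, L i * (w' i - w i) ^ 2 := by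
    have := abs_le.mp hsm
    linarith [this.2]
  have h2 : ∑ i, L i * (w' i - w i) ^ 2 = η ^ 2 * ∑ i, L i := by
    rw [Finset.mul_sum]
    exact Finset.sum_congr rfl fun i _ => by rw [hsq i]; ring
  have h3 : ∀ i, g w i * (w' i - w i)
      ≤ -η * |g w i| + 2 * η * (|g w i| * (if v i ≠ Real.sign (g w i) then (1 : ℝ) else 0)) := by
    intro i
    rw [hdiff i]
    by_cases hc : v i ≠ Real.sign (g w i)
    · simp only [if_pos hc, mul_one]
      have hb : |g w i * v i| = |g w i| := by
        rcases hv i with h | h <;> rw [h] <;> simp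
      have hbd : -(|g w i|) ≤ g w i * v i := by
        have := neg_abs_le (g w i * v i); rw [hb] at this; exact this
      nlinarith [hη.le, abs_nonneg (g w i)]
    · push_neg at hc
      rw [if_neg (by exact fun h => h hc), mul_zero, mul_zero, add_zero]
      have hg0 : g w i ≠ 0 := by
        intro h0
        rcases hv i with h | h <;> rw [h0, Real.sign_zero] at hc <;> rw [hc] at h <;> norm_num at h
      have : g w i * v i = |g w i| := by
        rcases lt_trichotomy (g w i) 0 with hlt | heq | hgt
        · rw [Real.sign_of_neg hlt] at hc
          rw [hc, abs_of_neg hlt]; ring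
        · exact absurd heq hg0
        · rw [Real.sign_of_pos hgt] at hc
          rw [hc, abs_of_pos hgt]; ring
      have : g w i * -(η * v i) = -η * |g w i| := by
        rw [show g w i * -(η * v i) = -η * (g w i * v i) by ring, this]
      linarith [this.le]
  calc F w' - F w ≤ ∑ i, g w i * (w' i - w i) + (1/2) * ∑ i, L i * (w' i - w i) ^ 2 := h1
    _ ≤ (∑ i, (-η * |g w i| + 2 * η * (|g w i| * (if v i ≠ Real.sign (g w i) then (1 : ℝ) else 0))))
        + (1/2) * (η ^ 2 * ∑ i, L i) := by
        rw [h2]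
        gcongr with i _
        exact h3 i
    _ = -η * ∑ i, |g w i| + η ^ 2 / 2 * ∑ i, L i
        + 2 * η * ∑ i, |g w i| * (if v i ≠ Real.sign (g w i) then (1 : ℝ) else 0) := by
        rw [Finset.sum_add_distrib, ← Finset.mul_sum, ← Finset.mul_sum]
        ring
end

section
/- Let K ≥ 1, σ², γ > 0 and h(z) = ∑_{n=0}^{K} [(σ²/γ)/(n + σ²/γ)] C(K,n) z^{K−n}(1−z)^n for z ∈ [0,1]. Then h is monotonically nondecreasing in z on [0,1], with h(1) = 1. -/
/-!
Here `h(z) = ∑ₙ aₙ C(K,n) z^(K-n) (1-z)^n` with decreasing weights `aₙ = c/(n+c)`, `c = σ²/γ`.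
Differentiating such a sum and regrouping by `(K+1-n) C(K+1,n) = (K+1) C(K,n)` and
`n C(K+1,n) = (K+1) C(K,n-1)` shows that the derivative of the degree-`K+1` sum with coefficients
`a` is `K+1` times the degree-`K` sum with coefficients `aₙ - aₙ₊₁ ≥ 0`, so `h' ≥ 0` on `[0,1]`.
At `z = 1` only the `n = 0` term survives, giving `a₀ = 1`.
-/

/-- The coefficient `c_ε(z)` of Lemma 2. -/
noncomputable def cerr (K : ℕ) (σ2 γ z : ℝ) : ℝ :=
  ∑ n ∈ Finset.range (K + 1),
    ((σ2 / γ) / (n + σ2 / γ)) * (K.choose n) * z ^ (K - n) * (1 - z) ^ n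

open Finset

/-- The mean of `a N` for `N ~ Binomial(K, 1 - z)`. -/
noncomputable def binomialMean (K : ℕ) (a : ℕ → ℝ) (z : ℝ) : ℝ :=
  ∑ n ∈ range (K + 1), a n * K.choose n * z ^ (K - n) * (1 - z) ^ n

theorem sum_choose_succ_mul_sub (K : ℕ) (a : ℕ → ℝ) (z : ℝ) :
    ∑ n ∈ range (K + 2),
        a n * (K + 1).choose n * ((K + 1 - n : ℕ) : ℝ) * z ^ (K - n) * (1 - z) ^ n =
      (K + 1) * ∑ n ∈ range (K + 1), a n * K.choose n * z ^ (K - n) * (1 - z) ^ n := by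
  rw [sum_range_succ, Nat.sub_self, Nat.cast_zero, mul_zero, zero_mul, zero_mul, add_zero, mul_sum]
  refine sum_congr rfl fun n _ => ?_
  have h := congrArg (Nat.cast (R := ℝ)) (Nat.choose_mul_succ_eq K n)
  push_cast at h
  linear_combination (-(a n) * z ^ (K - n) * (1 - z) ^ n) * h

theorem sum_choose_succ_mul_self (K : ℕ) (a : ℕ → ℝ) (z : ℝ) :
    ∑ n ∈ range (K + 2),
        a n * (K + 1).choose n * (n : ℝ) * z ^ (K + 1 - n) * (1 - z) ^ (n - 1) =
      (K + 1) * ∑ n ∈ range (K + 1), a (n + 1) * K.choose n * z ^ (K - n) * (1 - z) ^ n := by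
  rw [sum_range_succ', Nat.cast_zero, mul_zero, zero_mul, zero_mul, add_zero, mul_sum]
  refine sum_congr rfl fun n _ => ?_
  have h := congrArg (Nat.cast (R := ℝ)) (Nat.add_one_mul_choose_eq K n)
  push_cast at h
  simp only [Nat.add_sub_add_right, Nat.add_sub_cancel, Nat.cast_add, Nat.cast_one]
  linear_combination (-a (n + 1) * z ^ (K - n) * (1 - z) ^ n) * h

theorem hasDerivAt_binomialMean_succ (K : ℕ) (a : ℕ → ℝ) (z : ℝ) :
    HasDerivAt (binomialMean (K + 1) a)
      ((K + 1) * binomialMean K (fun n => a n - a (n + 1)) z) z := by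
  have hterm (n : ℕ) :
      HasDerivAt (fun z => a n * (K + 1).choose n * z ^ (K + 1 - n) * (1 - z) ^ n)
        (a n * (K + 1).choose n * ((K + 1 - n : ℕ) : ℝ) * z ^ (K - n) * (1 - z) ^ n
          - a n * (K + 1).choose n * (n : ℝ) * z ^ (K + 1 - n) * (1 - z) ^ (n - 1)) z := by
    have hpow := hasDerivAt_pow (K + 1 - n) z
    have hpow' := ((hasDerivAt_id' z).const_sub 1).fun_pow n
    have h := (hpow.fun_mul hpow').const_mul (a n * (K + 1).choose n)
    rw [show K + 1 - n - 1 = K - n by omega] at h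
    exact (h.congr_deriv (by ring)).congr_of_eventuallyEq (.of_forall fun y => by ring)
  refine (HasDerivAt.fun_sum (u := range (K + 2)) fun n _ => hterm n).congr_deriv ?_
  rw [sum_sub_distrib, sum_choose_succ_mul_sub, sum_choose_succ_mul_self, ← mul_sub,
    ← sum_sub_distrib, binomialMean]
  exact congrArg _ (sum_congr rfl fun n _ => by ring)

theorem binomialMean_nonneg (K : ℕ) {a : ℕ → ℝ} (ha : ∀ n, 0 ≤ a n) {z : ℝ} (hz₀ : 0 ≤ z)
    (hz₁ : z ≤ 1) : 0 ≤ binomialMean K a z :=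
  sum_nonneg fun n _ => by have := sub_nonneg.2 hz₁; have := ha n; positivity

theorem binomialMean_one (K : ℕ) (a : ℕ → ℝ) : binomialMean K a 1 = a 0 := by
  simp [binomialMean, sum_range_succ']

theorem monotoneOn_binomialMean (K : ℕ) {a : ℕ → ℝ} (ha : Antitone a) :
    MonotoneOn (binomialMean K a) (Set.Icc 0 1) := by
  cases K with
  | zero =>
    rw [show binomialMean 0 a = fun _ => a 0 from funext fun z => by simp [binomialMean]]
    exact monotoneOn_const
  | succ K =>
    have hderiv := hasDerivAt_binomialMean_succ K a
    refine monotoneOn_of_hasDerivWithinAt_nonneg (convex_Icc 0 1)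
      (fun x _ => (hderiv x).continuousAt.continuousWithinAt)
      (fun x _ => (hderiv x).hasDerivWithinAt) fun x hx => ?_
    rw [interior_Icc] at hx
    exact mul_nonneg (by positivity) <| binomialMean_nonneg K
      (fun n => sub_nonneg.2 (ha n.le_succ)) hx.1.le hx.2.le

theorem antitone_div_natCast_add {c : ℝ} (hc : 0 < c) : Antitone fun n : ℕ => c / (n + c) :=
  fun _ _ hmn => div_le_div_of_nonneg_left hc.le (by positivity) (by gcongr)

theorem stmt17_general (K : ℕ) (σ2 γ : ℝ) (hσ : 0 < σ2) (hγ : 0 < γ) :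
    MonotoneOn (fun z => cerr K σ2 γ z) (Set.Icc (0 : ℝ) 1) ∧ cerr K σ2 γ 1 = 1 := by
  have hc : 0 < σ2 / γ := div_pos hσ hγ
  have hcerr : (fun z => cerr K σ2 γ z) = binomialMean K fun n => (σ2 / γ) / (n + σ2 / γ) := rfl
  refine ⟨hcerr ▸ monotoneOn_binomialMean K (antitone_div_natCast_add hc), ?_⟩
  rw [show cerr K σ2 γ 1 = _ from congrFun hcerr 1, binomialMean_one]
  simp [hc.ne']

/-- `c_ε` is nondecreasing in the abstention probability `z` on `[0,1]`, and `c_ε(1) = 1`. -/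
theorem stmt17 (K : ℕ) (hK : 1 ≤ K) (σ2 γ : ℝ) (hσ : 0 < σ2) (hγ : 0 < γ) :
    MonotoneOn (fun z => cerr K σ2 γ z) (Set.Icc (0 : ℝ) 1) ∧ cerr K σ2 γ 1 = 1 :=
  stmt17_general K σ2 γ hσ hγ
end
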